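/- arXiv:1905.09536 — 12 statements merged into one kernel-verified Lean document; each statement's English description precedes it below -/
import Mathlib

section
/- If (W,R_h,R_v) is a rooted bimodal frame where R_h and R_v are commuting pseudo-equivalence relations, and R_h^+, R_v^+ denote their reflexive closures, then defining u ∼ v iff u R_h^+ v and u R_v^+ v, with X = {[v] : r R_h^+ v} and Y = {[w] : r R_v^+ w} for a root r, the map g([v],[w]) = [u] where v R_v^+ u and w R_h^+ u is a well-defined bijection from X × Y onto the set of ∼-classes of W. -/
/-- Reflexive closure of a relation. -/
def rcl {W : Type u} (R : W → W → Prop) : W → W → Prop := fun x y => x = y ∨ R x y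

/-- The `∼`-class of a point: `u ∼ v` iff `u R_h⁺ v` and `u R_v⁺ v`. -/
def cls {W : Type u} (Rh Rv : W → W → Prop) (u : W) : Set W :=
  {v | rcl Rh u v ∧ rcl Rv u v}

section Aux

variable {W : Type u} {Rh Rv R : W → W → Prop} {x y z u v w : W}

lemma rcl_refl (R : W → W → Prop) (x : W) : rcl R x x := Or.inl rfl

lemma rcl_symm (hs : Symmetric R) (h : rcl R x y) : rcl R y x :=
  h.elim (fun e => Or.inl e.symm) (fun h => Or.inr (hs h))

lemma rcl_trans (hpt : ∀ x y z : W, R x y → R y z → x = z ∨ R x z)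
    (h1 : rcl R x y) (h2 : rcl R y z) : rcl R x z := by
  rcases h1 with rfl | h1
  · exact h2
  rcases h2 with rfl | h2
  · exact Or.inr h1
  · exact hpt _ _ _ h1 h2

lemma rcl_comm (hcomm : ∀ x z : W, (∃ y, Rh x y ∧ Rv y z) ↔ (∃ y, Rv x y ∧ Rh y z))
    (h1 : rcl Rh x y) (h2 : rcl Rv y z) : ∃ t, rcl Rv x t ∧ rcl Rh t z := by
  rcases h1 with rfl | h1
  · exact ⟨z, h2, Or.inl rfl⟩
  rcases h2 with rfl | h2
  · exact ⟨x, Or.inl rfl, Or.inr h1⟩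
  rcases (hcomm x z).1 ⟨y, h1, h2⟩ with ⟨t, ht1, ht2⟩
  exact ⟨t, Or.inr ht1, Or.inr ht2⟩

lemma rcl_comm' (hcomm : ∀ x z : W, (∃ y, Rh x y ∧ Rv y z) ↔ (∃ y, Rv x y ∧ Rh y z))
    (h1 : rcl Rv x y) (h2 : rcl Rh y z) : ∃ t, rcl Rh x t ∧ rcl Rv t z := by
  rcases h1 with rfl | h1
  · exact ⟨z, h2, Or.inl rfl⟩
  rcases h2 with rfl | h2
  · exact ⟨x, Or.inl rfl, Or.inr h1⟩
  rcases (hcomm x z).2 ⟨y, h1, h2⟩ with ⟨t, ht1, ht2⟩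
  exact ⟨t, Or.inr ht1, Or.inr ht2⟩

lemma cls_eq_iff (hsymh : Symmetric Rh) (hsymv : Symmetric Rv)
    (hpth : ∀ x y z : W, Rh x y → Rh y z → x = z ∨ Rh x z)
    (hptv : ∀ x y z : W, Rv x y → Rv y z → x = z ∨ Rv x z) :
    cls Rh Rv u = cls Rh Rv v ↔ rcl Rh u v ∧ rcl Rv u v := by
  constructor
  · intro h
    have : v ∈ cls Rh Rv u := h ▸ ⟨rcl_refl _ _, rcl_refl _ _⟩
    exact this
  · rintro ⟨h1, h2⟩
    ext x
    constructor
    · rintro ⟨a1, a2⟩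
      exact ⟨rcl_trans hpth (rcl_symm hsymh h1) a1, rcl_trans hptv (rcl_symm hsymv h2) a2⟩
    · rintro ⟨a1, a2⟩
      exact ⟨rcl_trans hpth h1 a1, rcl_trans hptv h2 a2⟩

lemma root_h (hpth : ∀ x y z : W, Rh x y → Rh y z → x = z ∨ Rh x z)
    (hptv : ∀ x y z : W, Rv x y → Rv y z → x = z ∨ Rv x z)
    (hcomm : ∀ x z : W, (∃ y, Rh x y ∧ Rv y z) ↔ (∃ y, Rv x y ∧ Rh y z))
    (h : Relation.ReflTransGen (fun a b => Rh a b ∨ Rv a b) x w) :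
    ∃ v, rcl Rh x v ∧ rcl Rv v w := by
  induction h with
  | refl => exact ⟨x, rcl_refl _ _, rcl_refl _ _⟩
  | tail _ hbc ih =>
    obtain ⟨v, h1, h2⟩ := ih
    rcases hbc with h | h
    · obtain ⟨t, ht1, ht2⟩ := rcl_comm' hcomm h2 (Or.inr h)
      exact ⟨t, rcl_trans hpth h1 ht1, ht2⟩
    · exact ⟨v, h1, rcl_trans hptv h2 (Or.inr h)⟩

lemma root_v (hpth : ∀ x y z : W, Rh x y → Rh y z → x = z ∨ Rh x z)
    (hptv : ∀ x y z : W, Rv x y → Rv y z → x = z ∨ Rv x z)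
    (hcomm : ∀ x z : W, (∃ y, Rh x y ∧ Rv y z) ↔ (∃ y, Rv x y ∧ Rh y z))
    (h : Relation.ReflTransGen (fun a b => Rh a b ∨ Rv a b) x w) :
    ∃ v, rcl Rv x v ∧ rcl Rh v w := by
  induction h with
  | refl => exact ⟨x, rcl_refl _ _, rcl_refl _ _⟩
  | tail _ hbc ih =>
    obtain ⟨v, h1, h2⟩ := ih
    rcases hbc with h | h
    · exact ⟨v, h1, rcl_trans hpth h2 (Or.inr h)⟩
    · obtain ⟨t, ht1, ht2⟩ := rcl_comm hcomm h2 (Or.inr h)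
      exact ⟨t, rcl_trans hptv h1 ht1, ht2⟩

/-- Well-definedness: the `∼`-class of `u` depends only on the classes of `v` and `w`. -/
lemma welldef (hsymh : Symmetric Rh) (hsymv : Symmetric Rv)
    (hpth : ∀ x y z : W, Rh x y → Rh y z → x = z ∨ Rh x z)
    (hptv : ∀ x y z : W, Rv x y → Rv y z → x = z ∨ Rv x z)
    {v v' w w' u u' : W}
    (hvv : cls Rh Rv v = cls Rh Rv v') (hww : cls Rh Rv w = cls Rh Rv w')
    (h1 : rcl Rv v u) (h2 : rcl Rh w u) (h1' : rcl Rv v' u') (h2' : rcl Rh w' u') :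
    cls Rh Rv u = cls Rh Rv u' := by
  obtain ⟨hv1, hv2⟩ := (cls_eq_iff hsymh hsymv hpth hptv).1 hvv
  obtain ⟨hw1, hw2⟩ := (cls_eq_iff hsymh hsymv hpth hptv).1 hww
  refine (cls_eq_iff hsymh hsymv hpth hptv).2 ⟨?_, ?_⟩
  · exact rcl_trans hpth (rcl_symm hsymh h2) (rcl_trans hpth hw1 h2')
  · exact rcl_trans hptv (rcl_symm hsymv h1) (rcl_trans hptv hv2 h1')

end Aux

theorem stmt_3 (W : Type u) (Rh Rv : W → W → Prop) (r : W)
    (hsymh : Symmetric Rh) (hsymv : Symmetric Rv)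
    (hpth : ∀ x y z : W, Rh x y → Rh y z → x = z ∨ Rh x z)
    (hptv : ∀ x y z : W, Rv x y → Rv y z → x = z ∨ Rv x z)
    (hcomm : ∀ x z : W, (∃ y, Rh x y ∧ Rv y z) ↔ (∃ y, Rv x y ∧ Rh y z))
    (hroot : ∀ w : W, Relation.ReflTransGen (fun a b => Rh a b ∨ Rv a b) r w) :
    ∃ g : {s : Set W // ∃ v, rcl Rh r v ∧ s = cls Rh Rv v} ×
          {s : Set W // ∃ w, rcl Rv r w ∧ s = cls Rh Rv w} →
          {s : Set W // ∃ u, s = cls Rh Rv u},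
      Function.Bijective g ∧
      ∀ (v w u : W) (hv : rcl Rh r v) (hw : rcl Rv r w),
        rcl Rv v u → rcl Rh w u →
        g (⟨cls Rh Rv v, ⟨v, hv, rfl⟩⟩, ⟨cls Rh Rv w, ⟨w, hw, rfl⟩⟩)
          = ⟨cls Rh Rv u, ⟨u, rfl⟩⟩ := by
  classical
  -- existence of the meeting point `u`
  have exU : ∀ v w : W, rcl Rh r v → rcl Rv r w → ∃ u, rcl Rv v u ∧ rcl Rh w u := by
    intro v w hv hw
    obtain ⟨t, ht1, ht2⟩ := rcl_comm hcomm (rcl_symm hsymh hv) hw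
    exact ⟨t, ht1, rcl_symm hsymh ht2⟩
  refine ⟨fun p =>
      ⟨cls Rh Rv (Classical.choose (exU (Classical.choose p.1.2) (Classical.choose p.2.2)
        (Classical.choose_spec p.1.2).1 (Classical.choose_spec p.2.2).1)),
        _, rfl⟩, ?_, ?_⟩
  case refine_2 =>
    -- the defining equation for g
    intro v w u hv hw hu1 hu2
    apply Subtype.ext
    dsimp only
    set p : {s : Set W // ∃ v, rcl Rh r v ∧ s = cls Rh Rv v} ×
        {s : Set W // ∃ w, rcl Rv r w ∧ s = cls Rh Rv w} :=
      (⟨cls Rh Rv v, ⟨v, hv, rfl⟩⟩, ⟨cls Rh Rv w, ⟨w, hw, rfl⟩⟩) with hp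
    obtain ⟨hv0, hv0e⟩ := Classical.choose_spec p.1.2
    obtain ⟨hw0, hw0e⟩ := Classical.choose_spec p.2.2
    obtain ⟨hu01, hu02⟩ := Classical.choose_spec (exU _ _ hv0 hw0)
    exact welldef hsymh hsymv hpth hptv hv0e.symm hw0e.symm hu01 hu02 hu1 hu2
  case refine_1 =>
    constructor
    · -- injective
      intro p q hpq
      have h := congrArg Subtype.val hpq
      dsimp only at h
      obtain ⟨hvp, hvpe⟩ := Classical.choose_spec p.1.2
      obtain ⟨hwp, hwpe⟩ := Classical.choose_spec p.2.2
      obtain ⟨hup1, hup2⟩ := Classical.choose_spec (exU _ _ hvp hwp)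
      obtain ⟨hvq, hvqe⟩ := Classical.choose_spec q.1.2
      obtain ⟨hwq, hwqe⟩ := Classical.choose_spec q.2.2
      obtain ⟨huq1, huq2⟩ := Classical.choose_spec (exU _ _ hvq hwq)
      obtain ⟨hu1, hu2⟩ := (cls_eq_iff hsymh hsymv hpth hptv).1 h
      -- classes of the chosen v's agree
      have hvv : cls Rh Rv (Classical.choose p.1.2) = cls Rh Rv (Classical.choose q.1.2) := by
        refine (cls_eq_iff hsymh hsymv hpth hptv).2 ⟨?_, ?_⟩
        · exact rcl_trans hpth (rcl_symm hsymh hvp) hvq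
        · exact rcl_trans hptv hup1 (rcl_trans hptv hu2 (rcl_symm hsymv huq1))
      have hww : cls Rh Rv (Classical.choose p.2.2) = cls Rh Rv (Classical.choose q.2.2) := by
        refine (cls_eq_iff hsymh hsymv hpth hptv).2 ⟨?_, ?_⟩
        · exact rcl_trans hpth hup2 (rcl_trans hpth hu1 (rcl_symm hsymh huq2))
        · exact rcl_trans hptv (rcl_symm hsymv hwp) hwq
      have e1 : p.1 = q.1 := Subtype.ext (by rw [hvpe, hvqe, hvv])
      have e2 : p.2 = q.2 := Subtype.ext (by rw [hwpe, hwqe, hww])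
      exact Prod.ext e1 e2
    · -- surjective
      intro s
      obtain ⟨sval, u, rfl⟩ := s
      obtain ⟨v, hv1, hv2⟩ := root_h hpth hptv hcomm (hroot u)
      obtain ⟨w, hw1, hw2⟩ := root_v hpth hptv hcomm (hroot u)
      refine ⟨(⟨cls Rh Rv v, ⟨v, hv1, rfl⟩⟩, ⟨cls Rh Rv w, ⟨w, hw1, rfl⟩⟩), ?_⟩
      apply Subtype.ext
      dsimp only
      set p : {s : Set W // ∃ v, rcl Rh r v ∧ s = cls Rh Rv v} ×
          {s : Set W // ∃ w, rcl Rv r w ∧ s = cls Rh Rv w} :=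
        (⟨cls Rh Rv v, ⟨v, hv1, rfl⟩⟩, ⟨cls Rh Rv w, ⟨w, hw1, rfl⟩⟩) with hp
      obtain ⟨hv0, hv0e⟩ := Classical.choose_spec p.1.2
      obtain ⟨hw0, hw0e⟩ := Classical.choose_spec p.2.2
      obtain ⟨hu01, hu02⟩ := Classical.choose_spec (exU _ _ hv0 hw0)
      exact welldef hsymh hsymv hpth hptv hv0e.symm hw0e.symm hu01 hu02 hv2 hw2
end

section
/- Latin square p-morphism for hvstrict bi-clusters: let C be a finite set of size n ≥ 1 with the bimodal frame structure where R_h = R_v = ≠_C, so that every point is R_h-irreflexive and R_v-irreflexive and any two distinct points are related. If U and V are n-element sets and f : U × V → C is a function whose matrix is a Latin square (each element of C occurs exactly once in each row and each column), then f is a p-morphism from the product frame (U,≠_U) × (V,≠_V) onto (C, ≠_C, ≠_C). -/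
/-- Horizontal relation of the product of two difference frames. -/
def ProdH {U V : Type u} (p q : U × V) : Prop := p.1 ≠ q.1 ∧ p.2 = q.2

/-- Vertical relation of the product of two difference frames. -/
def ProdV {U V : Type u} (p q : U × V) : Prop := p.2 ≠ q.2 ∧ p.1 = q.1

/-- `f` is a surjective bimodal p-morphism from the product of the difference
frames on `U` and `V` onto the bimodal frame `(C, Rh, Rv)`. -/
def IsBiPMorphism {U V : Type u} {C : Type v} (Rh Rv : C → C → Prop)
    (f : U × V → C) : Prop :=
  Function.Surjective f ∧
  (∀ p q : U × V, ProdH p q → Rh (f p) (f q)) ∧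
  (∀ p q : U × V, ProdV p q → Rv (f p) (f q)) ∧
  (∀ (p : U × V) (c : C), Rh (f p) c → ∃ q : U × V, ProdH p q ∧ f q = c) ∧
  (∀ (p : U × V) (c : C), Rv (f p) c → ∃ q : U × V, ProdV p q ∧ f q = c)

theorem stmt_5 (n : ℕ) (hn : 1 ≤ n) (C U V : Type u)
    [Finite C] [Finite U] [Finite V]
    (hC : Nat.card C = n) (hU : Nat.card U = n) (hV : Nat.card V = n)
    (f : U × V → C)
    (hrow : ∀ u : U, Function.Bijective fun v : V => f (u, v))
    (hcol : ∀ v : V, Function.Bijective fun u : U => f (u, v)) :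
    IsBiPMorphism (fun c c' : C => c ≠ c') (fun c c' : C => c ≠ c') f := by
  have hUne : Nonempty U := (Nat.card_pos_iff.mp (by omega : 0 < Nat.card U)).1
  refine ⟨?_, ?_, ?_, ?_, ?_⟩
  · intro c
    obtain ⟨u⟩ := hUne
    obtain ⟨v, hv⟩ := (hrow u).2 c
    exact ⟨(u, v), hv⟩
  · rintro ⟨u, v⟩ ⟨u', v'⟩ ⟨h1, h2⟩
    dsimp at h2; subst h2
    intro h
    exact h1 ((hcol v).1 h)
  · rintro ⟨u, v⟩ ⟨u', v'⟩ ⟨h1, h2⟩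
    dsimp at h2; subst h2
    intro h
    exact h1 ((hrow u).1 h)
  · rintro ⟨u, v⟩ c hc
    obtain ⟨u', hu'⟩ := (hcol v).2 c
    refine ⟨(u', v), ⟨?_, rfl⟩, hu'⟩
    rintro rfl
    exact hc (by simpa using hu')
  · rintro ⟨u, v⟩ c hc
    obtain ⟨v', hv'⟩ := (hrow u).2 c
    refine ⟨(u, v'), ⟨?_, rfl⟩, hv'⟩
    rintro rfl
    exact hc (by simpa using hv')
end

section
/- Necessity of size constraints for product preimages, part 1: suppose f is a surjective bimodal p-morphism from (U,≠_U) × (V,≠_V) onto a bi-cluster frame (C, R_h, R_v) (where any two distinct points of C are both R_h- and R_v-related). If C contains a point a with R_h a a and ¬R_v a a, then |U| ≥ 2·|V|. -/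
theorem stmt_7 (U V C : Type u) (Rh Rv : C → C → Prop)
    (hbc : ∀ c c' : C, c ≠ c' → Rh c c' ∧ Rv c c')
    (a : C) (ha : Rh a a) (ha' : ¬ Rv a a)
    (f : U × V → C) (hf : IsBiPMorphism Rh Rv f) :
    2 * Cardinal.mk V ≤ Cardinal.mk U := by
  obtain ⟨hsurj, hh, hv, hliftH, hliftV⟩ := hf
  -- in each row there is at most one a-point
  have row_unique : ∀ u (v v' : V), f (u, v) = a → f (u, v') = a → v = v' := by
    intro u v v' h1 h2
    by_contra hne
    have := hv (u, v) (u, v') ⟨hne, rfl⟩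
    rw [h1, h2] at this
    exact ha' this
  -- each column contains two distinct a-points
  have col : ∀ v : V, ∃ u u' : U, u ≠ u' ∧ f (u, v) = a ∧ f (u', v) = a := by
    intro v
    obtain ⟨p₀, hp₀⟩ := hsurj a
    have h1 : ∃ u, f (u, v) = a := by
      by_cases hc : f (p₀.1, v) = a
      · exact ⟨p₀.1, hc⟩
      · have hr : Rh (f (p₀.1, v)) a := (hbc _ _ hc).1
        obtain ⟨q, hq, hqa⟩ := hliftH (p₀.1, v) a hr
        refine ⟨q.1, ?_⟩
        rw [← hqa]
        congr 1
        exact Prod.ext rfl hq.2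
    obtain ⟨u, hu⟩ := h1
    have hr : Rh (f (u, v)) a := by rw [hu]; exact ha
    obtain ⟨q, hq, hqa⟩ := hliftH (u, v) a hr
    refine ⟨u, q.1, hq.1, hu, ?_⟩
    rw [← hqa]
    congr 1
    exact Prod.ext rfl hq.2
  choose g1 g2 hgne hg1 hg2 using col
  have hinj : Function.Injective (fun bv : ULift.{u} Bool × V =>
      if bv.1.down then g1 bv.2 else g2 bv.2) := by
    rintro ⟨⟨b⟩, v⟩ ⟨⟨b'⟩, v'⟩ h
    simp only at h
    have hvv : v = v' := by
      cases b <;> cases b' <;> simp at h <;>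
        [exact row_unique _ _ _ (hg2 v) (h ▸ hg2 v');
         exact row_unique _ _ _ (hg2 v) (h ▸ hg1 v');
         exact row_unique _ _ _ (hg1 v) (h ▸ hg2 v');
         exact row_unique _ _ _ (hg1 v) (h ▸ hg1 v')]
    subst hvv
    cases b <;> cases b' <;> simp_all
    exact hgne v h.symm
  have hle : Cardinal.mk (ULift.{u} Bool × V) ≤ Cardinal.mk U :=
    Cardinal.mk_le_of_injective hinj
  have heq : Cardinal.mk (ULift.{u} Bool × V) = 2 * Cardinal.mk V := by
    simp [Cardinal.mk_prod]
  rwa [heq] at hle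
end

section
/- Necessity of size constraints for product preimages, part 2: suppose f is a surjective bimodal p-morphism from (U,≠_U) × (V,≠_V) onto a bi-cluster (C,R_h,R_v). If C contains a point b with ¬R_h b b and ¬R_v b b, then |U| = |V|. -/
theorem stmt_8 (U V C : Type u) (Rh Rv : C → C → Prop)
    (hbc : ∀ c c' : C, c ≠ c' → Rh c c' ∧ Rv c c')
    (b : C) (hb : ¬ Rh b b) (hb' : ¬ Rv b b)
    (f : U × V → C) (hf : IsBiPMorphism Rh Rv f) :
    Cardinal.mk U = Cardinal.mk V := by
  obtain ⟨hsurj, hfh, hfv, hbh, hbv⟩ := hf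
  obtain ⟨p0, hp0⟩ := hsurj b
  -- existence: for each v there is u with f (u, v) = b
  have exU : ∀ v : V, ∃ u : U, f (u, v) = b := by
    intro v
    by_cases hv : v = p0.2
    · exact ⟨p0.1, by rw [hv]; simpa using hp0⟩
    · have h1 : Rv (f p0) (f (p0.1, v)) := hfv _ _ ⟨fun h => hv h.symm, rfl⟩
      rw [hp0] at h1
      have hne : f (p0.1, v) ≠ b := fun h => hb' (h ▸ h1)
      have h2 : Rh (f (p0.1, v)) b := (hbc _ _ hne).1
      obtain ⟨q, hq1, hq2⟩ := hbh _ _ h2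
      exact ⟨q.1, by rwa [show (q.1, v) = q from Prod.ext rfl hq1.2]⟩
  -- existence: for each u there is v with f (u, v) = b
  have exV : ∀ u : U, ∃ v : V, f (u, v) = b := by
    intro u
    by_cases hu : u = p0.1
    · exact ⟨p0.2, by rw [hu]; simpa using hp0⟩
    · have h1 : Rh (f p0) (f (u, p0.2)) := hfh _ _ ⟨fun h => hu h.symm, rfl⟩
      rw [hp0] at h1
      have hne : f (u, p0.2) ≠ b := fun h => hb (h ▸ h1)
      have h2 : Rv (f (u, p0.2)) b := (hbc _ _ hne).2
      obtain ⟨q, hq1, hq2⟩ := hbv _ _ h2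
      exact ⟨q.2, by rwa [show (u, q.2) = q from Prod.ext hq1.2 rfl]⟩
  choose g hg using exU
  choose g' hg' using exV
  have hginj : Function.Injective g := by
    intro v1 v2 h
    by_contra hne
    have : Rv (f (g v1, v1)) (f (g v1, v2)) := hfv _ _ ⟨hne, rfl⟩
    rw [hg v1, h, hg v2] at this
    exact hb' this
  have hg'inj : Function.Injective g' := by
    intro u1 u2 h
    by_contra hne
    have : Rh (f (u1, g' u1)) (f (u2, g' u1)) := hfh _ _ ⟨hne, rfl⟩
    rw [hg' u1, h, hg' u2] at this
    exact hb this
  exact le_antisymm (Cardinal.mk_le_of_injective hg'inj)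
    (Cardinal.mk_le_of_injective hginj)
end

section
/- Impossibility of certain bi-clusters: there is no surjective bimodal p-morphism from any product of difference frames (U,≠_U) × (V,≠_V) onto a finite bi-cluster C that contains a point with R_h reflexive and R_v irreflexive, a point with R_h irreflexive and R_v reflexive, but no point that is both R_h- and R_v-reflexive. (Combining the constraints |U| ≥ 2|V| and |V| ≥ 2|U| forces U, V empty, contradicting surjectivity onto nonempty C.) -/
/-!
A colour `c` that is `R_h`-reflexive but `R_v`-irreflexive occurs at least twice in every row
(every colour sees `c` horizontally, so the back condition supplies it) and at most once in every
column (two occurrences in a column would make `c` `R_v`-reflexive); hence `|V| · 2 ≤ |U|`.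
Symmetrically `|U| · 2 ≤ |V|`. These force `U = ∅` once one of `U`, `V` is finite, and finiteness
comes from `C` being finite: fixing `|C| + 1` rows, each column repeats a colour on them, which is
then `R_v`- and so not `R_h`-reflexive, and such a colour occurs at most once in each row.
-/

open Function

theorem isEmpty_of_injective_prod_bool {α β : Type*} {g₁ : β × Bool → α} {g₂ : α × Bool → β}
    (h₁ : Injective g₁) (h₂ : Injective g₂) (hfin : Finite α ∨ Finite β) : IsEmpty α := by
  have : Finite α := hfin.elim id fun _ =>
    have := Finite.of_injective g₂ h₂
    Finite.of_injective _ (Prod.mk_left_injective true)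
  have : Finite β :=
    have := Finite.of_injective g₁ h₁
    Finite.of_injective _ (Prod.mk_left_injective true)
  have hβα := Nat.card_le_card_of_injective g₁ h₁
  have hαβ := Nat.card_le_card_of_injective g₂ h₂
  simp only [Nat.card_prod, Nat.card_eq_fintype_card (α := Bool), Fintype.card_bool] at hβα hαβ
  exact Finite.card_eq_zero_iff.mp (by omega)

namespace IsBiPMorphism

variable {U V : Type u} {C : Type v} {Rh Rv : C → C → Prop} {f : U × V → C}

theorem swap (hf : IsBiPMorphism Rh Rv f) : IsBiPMorphism Rv Rh (f ∘ Prod.swap) := by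
  obtain ⟨hsurj, fwdH, fwdV, backH, backV⟩ := hf
  refine ⟨hsurj.comp Prod.swap_surjective, fun p q h => fwdV _ _ h, fun p q h => fwdH _ _ h,
    fun p c h => ?_, fun p c h => ?_⟩
  · obtain ⟨q, hq, rfl⟩ := backV p.swap c h
    exact ⟨q.swap, hq, rfl⟩
  · obtain ⟨q, hq, rfl⟩ := backH p.swap c h
    exact ⟨q.swap, hq, rfl⟩

theorem rh_self_of_eq (hf : IsBiPMorphism Rh Rv f) {u u' : U} {v : V} (hu : u ≠ u')
    (h : f (u, v) = f (u', v)) : Rh (f (u, v)) (f (u, v)) := by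
  simpa only [← h] using hf.2.1 (u, v) (u', v) ⟨hu, rfl⟩

theorem rv_self_of_eq (hf : IsBiPMorphism Rh Rv f) {u : U} {v v' : V} (hv : v ≠ v')
    (h : f (u, v) = f (u, v')) : Rv (f (u, v)) (f (u, v)) :=
  hf.swap.rh_self_of_eq (u := v) (u' := v') (v := u) hv h

theorem exists_ne_fst_of_rh (hf : IsBiPMorphism Rh Rv f) {u : U} {v : V} {c : C}
    (h : Rh (f (u, v)) c) : ∃ u', u' ≠ u ∧ f (u', v) = c := by
  obtain ⟨⟨u', v'⟩, ⟨hu, rfl⟩, hc⟩ := hf.2.2.2.1 (u, v) c h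
  exact ⟨u', Ne.symm hu, hc⟩

theorem exists_injective_prod_bool (hf : IsBiPMorphism Rh Rv f) {c : C}
    (hc : ∀ c', Rh c' c) (hcv : ¬ Rv c c) : ∃ g : V × Bool → U, Injective g := by
  obtain ⟨⟨u₀, -⟩, -⟩ := hf.1 c
  have hrow : ∀ v u, ∃ u', u' ≠ u ∧ f (u', v) = c := fun v u => hf.exists_ne_fst_of_rh (hc _)
  have hcol : ∀ u v v', f (u, v) = c → f (u, v') = c → v = v' := by
    intro u v v' hv hv'
    by_contra hne
    exact hcv (hv ▸ hf.rv_self_of_eq hne (hv.trans hv'.symm))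
  choose g₁ _ hg₁ using fun v => hrow v u₀
  choose g₂ hg₂ hg₂' using fun v => hrow v (g₁ v)
  refine ⟨fun x => if x.2 then g₁ x.1 else g₂ x.1, ?_⟩
  have hg : ∀ x : V × Bool, f ((if x.2 then g₁ x.1 else g₂ x.1), x.1) = c := by
    rintro ⟨v, _ | _⟩ <;> simp [hg₁, hg₂']
  rintro ⟨v, s⟩ ⟨v', s'⟩ h
  dsimp only at h
  obtain rfl : v = v' := hcol _ _ _ (hg (v, s)) (h ▸ hg (v', s'))
  cases s <;> cases s' <;> simp_all [Ne.symm (hg₂ v)]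

theorem finite_of_infinite [Finite C] [Infinite V] (hf : IsBiPMorphism Rh Rv f)
    (hirr : ∀ c, Rh c c → ¬ Rv c c) : Finite U := by
  let g : Fin (Nat.card C + 1) ↪ V := Fin.valEmbedding.trans (Infinite.natEmbedding V)
  have hrep : ∀ u, ∃ i, Rv (f (u, g i)) (f (u, g i)) := by
    intro u
    have hni : ¬ Injective fun i => f (u, g i) := fun hinj => by
      simpa using Nat.card_le_card_of_injective _ hinj
    obtain ⟨i, j, hij, hne⟩ := not_injective_iff.mp hni
    exact ⟨i, hf.rv_self_of_eq (g.injective.ne hne) hij⟩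
  choose i hi using hrep
  refine Finite.of_injective (fun u => (i u, f (u, g (i u)))) fun u u' h => ?_
  simp only [Prod.mk.injEq] at h
  obtain ⟨hi', hc⟩ := h
  by_contra hne
  rw [hi'] at hc
  exact hirr _ (hf.rh_self_of_eq hne hc) (hc ▸ hi u')

end IsBiPMorphism

theorem stmt_9 (C : Type v) [Finite C] (Rh Rv : C → C → Prop)
    (hbc : ∀ c c' : C, c ≠ c' → Rh c c' ∧ Rv c c')
    (h1 : ∃ c : C, Rh c c ∧ ¬ Rv c c)
    (h2 : ∃ c : C, ¬ Rh c c ∧ Rv c c)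
    (h3 : ¬ ∃ c : C, Rh c c ∧ Rv c c) :
    ∀ (U V : Type u) (f : U × V → C), ¬ IsBiPMorphism Rh Rv f := by
  intro U V f hf
  obtain ⟨c₁, hh₁, hv₁⟩ := h1
  obtain ⟨c₂, hh₂, hv₂⟩ := h2
  have sees {R : C → C → Prop} (hR : ∀ c c', c ≠ c' → R c c') {c : C} (hc : R c c) (c' : C) :
      R c' c := by
    by_cases h : c' = c
    · exact h ▸ hc
    · exact hR c' c h
  obtain ⟨g₁, hg₁⟩ :=
    hf.exists_injective_prod_bool (sees (fun c c' h => (hbc c c' h).1) hh₁) hv₁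
  obtain ⟨g₂, hg₂⟩ :=
    hf.swap.exists_injective_prod_bool (sees (fun c c' h => (hbc c c' h).2) hv₂) hh₂
  have hfin : Finite U ∨ Finite V := by
    rcases finite_or_infinite V with hV | hV
    · exact .inr hV
    · exact .inl (hf.finite_of_infinite fun c hh hv => h3 ⟨c, hh, hv⟩)
  have := isEmpty_of_injective_prod_bool hg₁ hg₂ hfin
  obtain ⟨⟨u, -⟩, -⟩ := hf.1 c₁
  exact isEmptyElim u
end

section
/- Every countably infinite bi-cluster is a p-morphic image of (ℕ,≠) × (ℕ,≠): if (C,R_h,R_v) is a bimodal frame on a countably infinite set C such that c R_h c' and c R_v c' for all distinct c,c', then there is a surjective bimodal p-morphism from the product frame (ℕ,≠) × (ℕ,≠) onto (C,R_h,R_v). -/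
/-!
A map from `(ℕ, ≠) × (ℕ, ≠)` into a bi-cluster is a p-morphism as soon as every point `c`
occurs in each column once if `c` is `Rh`-irreflexive and at least twice if it is
`Rh`-reflexive, and likewise in each row with `Rv`.

Such a grid is assembled from cells. Index rows by `(a, s)` and columns by `(b, t)` in `ℤ × ℤ`,
give the cell `(s, t)` an enumeration `φ s t : ℤ ↪ C` of an infinite set `S s t`, and put
`φ s t (a + b)` at `((a, s), (b, t))`. A point then occurs in a row once per cell of that row
containing it, so it suffices that `c ∈ S s t ↔ h c s + h' c t = u c`, where `h c` halves its
argument when `c` is `Rh`-reflexive (two solutions `s` for each `t`) and is the identity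
otherwise (one solution), and `u` takes every value infinitely often on an infinite class of
points sharing the same reflexivity pattern, which makes every cell infinite.
-/

open Function Set

/-- `s` is a singleton if `¬p` and has at least two points if `p`: the number of preimages a
point of reflexivity `p` needs on each line of a p-morphism onto a cluster. -/
def ReflSized {α : Type*} (p : Prop) (s : Set α) : Prop :=
  s.Nonempty ∧ (p ↔ s.Nontrivial)

lemma ReflSized.image_iff {α β : Type*} {p : Prop} {s : Set α} {f : α → β} (hf : InjOn f s) :
    ReflSized p (f '' s) ↔ ReflSized p s := by
  simp only [ReflSized, image_nonempty]
  refine and_congr_right fun _ => iff_congr Iff.rfl ⟨nontrivial_of_image f s, ?_⟩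
  exact fun hs => hs.image_of_injOn hf

section DiffFrame

variable {X C : Type*} (R : C → C → Prop)

/-- `g` is a p-morphism from the difference frame `(X, ≠)` to `(C, R)`. -/
def IsDiffPMorphism (g : X → C) : Prop :=
  (∀ x y, x ≠ y → R (g x) (g y)) ∧ ∀ x c, R (g x) c → ∃ y, x ≠ y ∧ g y = c

lemma isDiffPMorphism_of_reflSized (hR : ∀ c c', c ≠ c' → R c c') {g : X → C}
    (hg : ∀ c, ReflSized (R c c) (g ⁻¹' {c})) : IsDiffPMorphism R g := by
  constructor
  · intro x y hxy
    by_cases h : g x = g y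
    · rw [← h]
      exact (hg (g x)).2.2 ⟨x, rfl, y, h.symm, hxy⟩
    · exact hR _ _ h
  · intro x c hxc
    by_cases h : g x = c
    · subst h
      obtain ⟨y, hy, hyx⟩ := ((hg (g x)).2.1 hxc).exists_ne x
      exact ⟨y, hyx.symm, hy⟩
    · obtain ⟨y, hy⟩ := (hg c).1
      exact ⟨y, fun hxy => h (hxy ▸ hy), hy⟩

end DiffFrame

lemma isBiPMorphism_of_lines {U V : Type u} {C : Type v} {Rh Rv : C → C → Prop}
    {f : U × V → C} (hf : Surjective f) (hcol : ∀ v, IsDiffPMorphism Rh fun u => f (u, v))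
    (hrow : ∀ u, IsDiffPMorphism Rv fun v => f (u, v)) : IsBiPMorphism Rh Rv f := by
  refine ⟨hf, ?_, ?_, ?_, ?_⟩
  · rintro ⟨u, v⟩ ⟨u', v'⟩ ⟨hu, rfl : v = v'⟩
    exact (hcol v).1 u u' hu
  · rintro ⟨u, v⟩ ⟨u', v'⟩ ⟨hv, rfl : u = u'⟩
    exact (hrow u).1 v v' hv
  · rintro ⟨u, v⟩ c h
    obtain ⟨u', hu, rfl⟩ := (hcol v).2 u c h
    exact ⟨(u', v), ⟨hu, rfl⟩, rfl⟩
  · rintro ⟨u, v⟩ c h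
    obtain ⟨v', hv, rfl⟩ := (hrow u).2 v c h
    exact ⟨(u, v'), ⟨hv, rfl⟩, rfl⟩

section Grid

variable {G S T U V C : Type*} [AddCommGroup G] (φ : S → T → G → C)
  (eU : U ≃ G × S) (eV : V ≃ G × T)

def gridMap (p : U × V) : C :=
  φ (eU p.1).2 (eV p.2).2 ((eU p.1).1 + (eV p.2).1)

variable {φ}

lemma reflSized_gridMap_row_iff (hφ : ∀ s t, Injective (φ s t)) (p : Prop) (u : U) (c : C) :
    ReflSized p {v | gridMap φ eU eV (u, v) = c} ↔
      ReflSized p {t | c ∈ range (φ (eU u).2 t)} := by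
  have himage : (fun v => (eV v).2) '' {v | gridMap φ eU eV (u, v) = c} =
      {t | c ∈ range (φ (eU u).2 t)} := by
    ext t
    constructor
    · rintro ⟨v, hv, rfl⟩
      exact ⟨_, hv⟩
    · rintro ⟨g, rfl⟩
      exact ⟨eV.symm (g - (eU u).1, t), by simp [gridMap], by simp⟩
  have hinj : InjOn (fun v => (eV v).2) {v | gridMap φ eU eV (u, v) = c} := by
    intro v hv v' hv' ht
    simp only [mem_ofPred_eq, gridMap] at hv hv' ht
    rw [← hv', ← ht] at hv
    exact eV.injective (Prod.ext (add_left_cancel (hφ _ _ hv)) ht)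
  rw [← himage, ReflSized.image_iff hinj]

lemma reflSized_gridMap_col_iff (hφ : ∀ s t, Injective (φ s t)) (p : Prop) (v : V) (c : C) :
    ReflSized p {u | gridMap φ eU eV (u, v) = c} ↔
      ReflSized p {s | c ∈ range (φ s (eV v).2)} := by
  have hflip : ∀ u, gridMap φ eU eV (u, v) = gridMap (flip φ) eV eU (v, u) := fun u => by
    simp only [gridMap, flip, add_comm]
  simp only [hflip]
  exact reflSized_gridMap_row_iff eV eU (fun t s => hφ s t) p v c

end Grid

def halveIf (p : Prop) [Decidable p] (x : ℤ) : ℤ := if p then x / 2 else x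

lemma reflSized_halveIf_fiber (p : Prop) [Decidable p] (k : ℤ) :
    ReflSized p {x | halveIf p x = k} := by
  by_cases hp : p
  · simp only [halveIf, if_pos hp]
    have hfib : ∀ x, x / 2 = k → x ∈ {x : ℤ | x / 2 = k} := fun _ h => h
    exact ⟨⟨2 * k, hfib _ (by omega)⟩,
      iff_of_true hp ⟨2 * k, hfib _ (by omega), 2 * k + 1, hfib _ (by omega), by omega⟩⟩
  · simp only [halveIf, if_neg hp, ofPred_eq_eq_singleton]
    exact ⟨singleton_nonempty k, iff_of_false hp not_nontrivial_singleton⟩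

lemma exists_int_fibers_infinite {C : Type*} [Countable C] {K : Set C} (hK : K.Infinite) :
    ∃ u : C → ℤ, ∀ k, {c ∈ K | u c = k}.Infinite := by
  classical
  have := hK.to_subtype
  obtain ⟨_⟩ := nonempty_denumerable K
  let e : K ≃ ℤ × ℕ := Denumerable.equiv₂ K (ℤ × ℕ)
  refine ⟨fun c => if h : c ∈ K then (e ⟨c, h⟩).1 else 0, fun k => ?_⟩
  refine infinite_of_injective_forall_mem (f := fun n => (e.symm (k, n) : C)) ?_ fun n => ?_
  · intro n n' h
    simpa using e.symm.injective (Subtype.ext h)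
  · simp

lemma exists_injective_range_eq {C : Type*} [Countable C] {s : Set C} (hs : s.Infinite) :
    ∃ g : ℤ → C, Injective g ∧ range g = s := by
  have := hs.to_subtype
  obtain ⟨_⟩ := nonempty_denumerable s
  refine ⟨Subtype.val ∘ Denumerable.equiv₂ ℤ s, Subtype.val_injective.comp (Equiv.injective _), ?_⟩
  rw [range_comp, (Equiv.surjective _).range_eq, image_univ, Subtype.range_coe]

lemma exists_cells {C : Type*} [Countable C] [Infinite C] (P Q : C → Prop) :
    ∃ S : ℤ → ℤ → Set C, (∀ s t, (S s t).Infinite) ∧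
      (∀ t c, ReflSized (P c) {s | c ∈ S s t}) ∧ (∀ s c, ReflSized (Q c) {t | c ∈ S s t}) := by
  classical
  obtain ⟨⟨p, q⟩, hpq⟩ := Finite.exists_infinite_fiber fun c => (P c, Q c)
  obtain ⟨u, hu⟩ := exists_int_fibers_infinite (infinite_coe_iff.mp hpq)
  refine ⟨fun s t => {c | halveIf (P c) s + halveIf (Q c) t = u c}, fun s t => ?_,
    fun t c => ?_, fun s c => ?_⟩
  · refine (hu (halveIf p s + halveIf q t)).mono ?_
    rintro c ⟨hc, hcu⟩
    obtain ⟨rfl, rfl⟩ := Prod.mk.inj hc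
    exact hcu.symm
  · convert reflSized_halveIf_fiber (P c) (u c - halveIf (Q c) t) using 2
    ext s
    simp only [mem_ofPred_eq]
    omega
  · convert reflSized_halveIf_fiber (Q c) (u c - halveIf (P c) s) using 2
    ext t
    simp only [mem_ofPred_eq]
    omega

lemma exists_grid {C : Type*} [Countable C] [Infinite C] (P Q : C → Prop) :
    ∃ f : ℕ × ℕ → C, (∀ n c, ReflSized (P c) {m | f (m, n) = c}) ∧
      ∀ m c, ReflSized (Q c) {n | f (m, n) = c} := by
  obtain ⟨S, hS, hcol, hrow⟩ := exists_cells P Q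
  choose φ hφ hφS using fun s t => exists_injective_range_eq (hS s t)
  let e : ℕ ≃ ℤ × ℤ := (Denumerable.eqv _).symm
  refine ⟨gridMap φ e e, fun n c => ?_, fun m c => ?_⟩
  · rw [reflSized_gridMap_col_iff e e hφ]
    simpa only [hφS] using hcol (e n).2 c
  · rw [reflSized_gridMap_row_iff e e hφ]
    simpa only [hφS] using hrow (e m).2 c

theorem stmt_10 (C : Type) [Countable C] [Infinite C] (Rh Rv : C → C → Prop)
    (hbc : ∀ c c' : C, c ≠ c' → Rh c c' ∧ Rv c c') :
    ∃ f : ℕ × ℕ → C, IsBiPMorphism Rh Rv f := by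
  obtain ⟨f, hcol, hrow⟩ := exists_grid (fun c => Rh c c) (fun c => Rv c c)
  refine ⟨f, isBiPMorphism_of_lines (fun c => ?_) (fun n => ?_) (fun m => ?_)⟩
  · obtain ⟨m, hm⟩ := (hcol 0 c).1
    exact ⟨(m, 0), hm⟩
  · exact isDiffPMorphism_of_reflSized _ (fun c c' h => (hbc c c' h).1) (hcol n)
  · exact isDiffPMorphism_of_reflSized _ (fun c c' h => (hbc c c' h).2) (hrow m)
end

section
/- Fitting lemma, combination direction: let F be a grid of bi-clusters indexed by X × Y, and suppose ξ : X ∪ Y → ℕ⁺ ∪ {ℵ₀} is such that for every (x,y) the bi-cluster F^{xy} is a surjective p-morphic image of (U_{xy},≠) × (V_{xy},≠) with |U_{xy}| = ξ(x) and |V_{xy}| = ξ(y). Then F itself is a surjective p-morphic image of (U,≠) × (V,≠) where |U| = Σ_{x∈X} ξ(x) and |V| = Σ_{y∈Y} ξ(y), obtained by taking U = disjoint union of sets U_x of size ξ(x), V = disjoint union of V_y of size ξ(y), and gluing the component p-morphisms blockwise. -/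
theorem stmt_11 (W X Y : Type u) (Rh Rv : W → W → Prop) (c : W → X × Y)
    (hc : Function.Surjective c)
    (hH1 : ∀ w w' : W, Rh w w' → (c w).2 = (c w').2)
    (hH2 : ∀ w w' : W, w ≠ w' → (c w).2 = (c w').2 → Rh w w')
    (hV1 : ∀ w w' : W, Rv w w' → (c w).1 = (c w').1)
    (hV2 : ∀ w w' : W, w ≠ w' → (c w).1 = (c w').1 → Rv w w')
    (ξ : X ⊕ Y → Cardinal.{u})
    (hξ : ∀ z, 1 ≤ ξ z ∧ ξ z ≤ Cardinal.aleph0)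
    (hloc : ∀ (x : X) (y : Y),
      ∃ (U' V' : Type u) (f : U' × V' → {w : W // c w = (x, y)}),
        Cardinal.mk U' = ξ (Sum.inl x) ∧ Cardinal.mk V' = ξ (Sum.inr y) ∧
        IsBiPMorphism (fun a b => Rh a.1 b.1) (fun a b => Rv a.1 b.1) f) :
    ∃ (U V : Type u) (h : U × V → W),
      Cardinal.mk U = Cardinal.sum (fun x : X => ξ (Sum.inl x)) ∧
      Cardinal.mk V = Cardinal.sum (fun y : Y => ξ (Sum.inr y)) ∧
      IsBiPMorphism Rh Rv h := by
  classical
  choose U' V' f hU hV hf using hloc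
  have hUne : ∀ x y, Nonempty (U' x y) := fun x y => by
    rw [← Cardinal.mk_ne_zero_iff, hU]
    exact Cardinal.one_le_iff_ne_zero.mp (hξ _).1
  have hVne : ∀ x y, Nonempty (V' x y) := fun x y => by
    rw [← Cardinal.mk_ne_zero_iff, hV]
    exact Cardinal.one_le_iff_ne_zero.mp (hξ _).1
  have hEqU : ∀ x y, Nonempty ((ξ (Sum.inl x)).out ≃ U' x y) := fun x y =>
    Cardinal.eq.mp (by rw [Cardinal.mk_out, hU])
  have hEqV : ∀ x y, Nonempty ((ξ (Sum.inr y)).out ≃ V' x y) := fun x y =>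
    Cardinal.eq.mp (by rw [Cardinal.mk_out, hV])
  set e : ∀ x y, (ξ (Sum.inl x)).out ≃ U' x y := fun x y => (hEqU x y).some with he
  set e' : ∀ x y, (ξ (Sum.inr y)).out ≃ V' x y := fun x y => (hEqV x y).some with he'
  refine ⟨Σ x : X, (ξ (Sum.inl x)).out, Σ y : Y, (ξ (Sum.inr y)).out,
    fun p => (f p.1.1 p.2.1 (e p.1.1 p.2.1 p.1.2, e' p.1.1 p.2.1 p.2.2)).1,
    by simp [Cardinal.mk_sigma, Cardinal.mk_out],
    by simp [Cardinal.mk_sigma, Cardinal.mk_out], ?_, ?_, ?_, ?_, ?_⟩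
  · -- surjectivity
    intro w
    obtain ⟨⟨a, b⟩, hab⟩ := (hf (c w).1 (c w).2).1 ⟨w, rfl⟩
    refine ⟨(⟨(c w).1, (e (c w).1 (c w).2).symm a⟩, ⟨(c w).2, (e' (c w).1 (c w).2).symm b⟩), ?_⟩
    simp only [Equiv.apply_symm_apply]
    exact congrArg Subtype.val hab
  · -- forth H
    rintro ⟨⟨x, u⟩, p2⟩ ⟨⟨x', u'⟩, q2⟩ ⟨h1, h2⟩
    simp only at h1 h2
    subst h2
    obtain ⟨y, v⟩ := p2
    by_cases hx : x = x'
    · subst hx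
      have hu : u ≠ u' := fun h => h1 (by rw [h])
      exact (hf x y).2.1 (e x y u, e' x y v) (e x y u', e' x y v)
        ⟨fun h => hu ((e x y).injective h), rfl⟩
    · apply hH2
      · intro hw
        have := congrArg c hw
        rw [(f x y _).2, (f x' y _).2] at this
        exact hx (congrArg Prod.fst this)
      · rw [(f x y _).2, (f x' y _).2]
  · -- forth V
    rintro ⟨p1, ⟨y, v⟩⟩ ⟨q1, ⟨y', v'⟩⟩ ⟨h1, h2⟩
    simp only at h1 h2
    subst h2
    obtain ⟨x, u⟩ := p1
    by_cases hy : y = y'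
    · subst hy
      have hv : v ≠ v' := fun h => h1 (by rw [h])
      exact (hf x y).2.2.1 (e x y u, e' x y v) (e x y u, e' x y v')
        ⟨fun h => hv ((e' x y).injective h), rfl⟩
    · apply hV2
      · intro hw
        have := congrArg c hw
        rw [(f x y _).2, (f x y' _).2] at this
        exact hy (congrArg Prod.snd this)
      · rw [(f x y _).2, (f x y' _).2]
  · -- back H
    rintro ⟨⟨x, u⟩, ⟨y, v⟩⟩ w hR
    have hcw2 : (c w).2 = y := by
      have := hH1 _ _ hR
      rw [(f x y _).2] at this
      exact this.symm
    by_cases hx : (c w).1 = x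
    · have hcw : c w = (x, y) := by rw [← hx, ← hcw2]
      obtain ⟨⟨a, b⟩, ⟨hne, hbeq⟩, hfq⟩ :=
        (hf x y).2.2.2.1 (e x y u, e' x y v) ⟨w, hcw⟩ hR
      refine ⟨(⟨x, (e x y).symm a⟩, ⟨y, v⟩), ⟨?_, rfl⟩, ?_⟩
      · simp only [ne_eq, Sigma.mk.inj_iff, heq_eq_eq, true_and]
        intro h
        exact hne (by rw [h, Equiv.apply_symm_apply])
      · subst hbeq
        simp only [Equiv.apply_symm_apply]
        exact congrArg Subtype.val hfq
    · set x'' := (c w).1 with hx''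
      have hcw : c w = (x'', y) := by rw [← hcw2]
      obtain ⟨a0⟩ := hUne x'' y
      by_cases hw0 : (f x'' y (a0, e' x'' y v)).1 = w
      · refine ⟨(⟨x'', (e x'' y).symm a0⟩, ⟨y, v⟩), ⟨?_, rfl⟩, ?_⟩
        · intro h
          exact hx (congrArg Sigma.fst h).symm
        · simpa [Equiv.apply_symm_apply] using hw0
      · have hrel : Rh (f x'' y (a0, e' x'' y v)).1 w := by
          apply hH2 _ _ hw0
          rw [(f x'' y _).2, hcw2]
        obtain ⟨⟨a1, b1⟩, ⟨hne, hbeq⟩, hfq⟩ :=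
          (hf x'' y).2.2.2.1 (a0, e' x'' y v) ⟨w, hcw⟩ hrel
        refine ⟨(⟨x'', (e x'' y).symm a1⟩, ⟨y, v⟩), ⟨?_, rfl⟩, ?_⟩
        · intro h
          exact hx (congrArg Sigma.fst h).symm
        · subst hbeq
          simp only [Equiv.apply_symm_apply]
          exact congrArg Subtype.val hfq
  · -- back V
    rintro ⟨⟨x, u⟩, ⟨y, v⟩⟩ w hR
    have hcw1 : (c w).1 = x := by
      have := hV1 _ _ hR
      rw [(f x y _).2] at this
      exact this.symm
    by_cases hy : (c w).2 = y
    · have hcw : c w = (x, y) := by rw [← hcw1, ← hy]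
      obtain ⟨⟨a, b⟩, ⟨hne, hbeq⟩, hfq⟩ :=
        (hf x y).2.2.2.2 (e x y u, e' x y v) ⟨w, hcw⟩ hR
      refine ⟨(⟨x, u⟩, ⟨y, (e' x y).symm b⟩), ⟨?_, rfl⟩, ?_⟩
      · simp only [ne_eq, Sigma.mk.inj_iff, heq_eq_eq, true_and]
        intro h
        exact hne (by rw [h, Equiv.apply_symm_apply])
      · subst hbeq
        simp only [Equiv.apply_symm_apply]
        exact congrArg Subtype.val hfq
    · set y'' := (c w).2 with hy''
      have hcw : c w = (x, y'') := by rw [← hcw1]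
      obtain ⟨b0⟩ := hVne x y''
      by_cases hw0 : (f x y'' (e x y'' u, b0)).1 = w
      · refine ⟨(⟨x, u⟩, ⟨y'', (e' x y'').symm b0⟩), ⟨?_, rfl⟩, ?_⟩
        · intro h
          exact hy (congrArg Sigma.fst h).symm
        · simpa [Equiv.apply_symm_apply] using hw0
      · have hrel : Rv (f x y'' (e x y'' u, b0)).1 w := by
          apply hV2 _ _ hw0
          rw [(f x y'' _).2, hcw1]
        obtain ⟨⟨a1, b1⟩, ⟨hne, hbeq⟩, hfq⟩ :=
          (hf x y'').2.2.2.2 (e x y'' u, b0) ⟨w, hcw⟩ hrel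
        refine ⟨(⟨x, u⟩, ⟨y'', (e' x y'').symm b1⟩), ⟨?_, rfl⟩, ?_⟩
        · intro h
          exact hy (congrArg Sigma.fst h).symm
        · subst hbeq
          simp only [Equiv.apply_symm_apply]
          exact congrArg Subtype.val hfq
end

section
/- Fitting lemma, decomposition direction: if h : (U,≠) × (V,≠) → F is a surjective bimodal p-morphism onto a grid of bi-clusters F = (X,Y,g), and for x ∈ X one sets U_x = {u ∈ U : ∃y ∃v, h(u,v) ∈ C_{xy}} and for y ∈ Y sets V_y = {v ∈ V : ∃x ∃u, h(u,v) ∈ C_{xy}}, then for every (x,y) ∈ X × Y the restriction of h to U_x × V_y is a surjective p-morphism onto the bi-cluster C_{xy}. -/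
theorem stmt_12 (W X Y U V : Type u) (Rh Rv : W → W → Prop) (c : W → X × Y)
    (hc : Function.Surjective c)
    (hH1 : ∀ w w' : W, Rh w w' → (c w).2 = (c w').2)
    (hH2 : ∀ w w' : W, w ≠ w' → (c w).2 = (c w').2 → Rh w w')
    (hV1 : ∀ w w' : W, Rv w w' → (c w).1 = (c w').1)
    (hV2 : ∀ w w' : W, w ≠ w' → (c w).1 = (c w').1 → Rv w w')
    (h : U × V → W) (hpm : IsBiPMorphism Rh Rv h) :
    ∀ (x : X) (y : Y),
      ∃ f : {u : U // ∃ v : V, (c (h (u, v))).1 = x} ×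
            {v : V // ∃ u : U, (c (h (u, v))).2 = y} →
            {w : W // c w = (x, y)},
        (∀ p, (f p).1 = h (p.1.1, p.2.1)) ∧
        IsBiPMorphism (fun a b => Rh a.1 b.1) (fun a b => Rv a.1 b.1) f := by
  intro x y
  obtain ⟨hsurj, hfh, hfv, hbh, hbv⟩ := hpm
  -- row coordinate depends only on u
  have key1 : ∀ u (v v' : V), (c (h (u, v))).1 = (c (h (u, v'))).1 := by
    intro u v v'
    by_cases hvv : v = v'
    · subst hvv; rfl
    · exact hV1 _ _ (hfv (u, v) (u, v') ⟨hvv, rfl⟩)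
  -- column coordinate depends only on v
  have key2 : ∀ (u u' : U) v, (c (h (u, v))).2 = (c (h (u', v))).2 := by
    intro u u' v
    by_cases huu : u = u'
    · subst huu; rfl
    · exact hH1 _ _ (hfh (u, v) (u', v) ⟨huu, rfl⟩)
  have main : ∀ (p : {u : U // ∃ v : V, (c (h (u, v))).1 = x} ×
      {v : V // ∃ u : U, (c (h (u, v))).2 = y}),
      c (h (p.1.1, p.2.1)) = (x, y) := by
    rintro ⟨⟨u, v₀, hu⟩, ⟨v, u₀, hv⟩⟩
    exact Prod.ext ((key1 u v v₀).trans hu) ((key2 u u₀ v).trans hv)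
  refine ⟨fun p => ⟨h (p.1.1, p.2.1), main p⟩, fun p => rfl, ?_, ?_, ?_, ?_, ?_⟩
  · -- surjectivity
    rintro ⟨w, hw⟩
    obtain ⟨⟨u, v⟩, huv⟩ := hsurj w
    refine ⟨(⟨u, v, ?_⟩, ⟨v, u, ?_⟩), Subtype.ext huv⟩
    · rw [huv, hw]
    · rw [huv, hw]
  · rintro ⟨⟨u, hu⟩, ⟨v, hv⟩⟩ ⟨⟨u', hu'⟩, ⟨v', hv'⟩⟩ ⟨h1, h2⟩
    have hv2 : v = v' := congrArg Subtype.val h2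
    subst hv2
    refine hfh (u, v) (u', v) ⟨fun e => h1 (Subtype.ext e), rfl⟩
  · rintro ⟨⟨u, hu⟩, ⟨v, hv⟩⟩ ⟨⟨u', hu'⟩, ⟨v', hv'⟩⟩ ⟨h1, h2⟩
    have hu2 : u = u' := congrArg Subtype.val h2
    subst hu2
    refine hfv (u, v) (u, v') ⟨fun e => h1 (Subtype.ext e), rfl⟩
  · -- back horizontal
    rintro ⟨⟨u, hu⟩, ⟨v, hv⟩⟩ ⟨w, hw⟩ hr
    obtain ⟨⟨u', v'⟩, ⟨hne, heq⟩, hq⟩ := hbh (u, v) w hr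
    simp only at hne heq hq
    subst heq
    refine ⟨(⟨u', ⟨v, ?_⟩⟩, ⟨v, hv⟩), ⟨?_, rfl⟩, Subtype.ext hq⟩
    · rw [hq, hw]
    · exact fun e => hne (congrArg Subtype.val e)
  · -- back vertical
    rintro ⟨⟨u, hu⟩, ⟨v, hv⟩⟩ ⟨w, hw⟩ hr
    obtain ⟨⟨u', v'⟩, ⟨hne, heq⟩, hq⟩ := hbv (u, v) w hr
    simp only at hne heq hq
    subst heq
    refine ⟨(⟨u, hu⟩, ⟨v', ⟨u, ?_⟩⟩), ⟨?_, rfl⟩, Subtype.ext hq⟩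
    · rw [hq, hw]
    · exact fun e => hne (congrArg Subtype.val e)
end

section
/- Pigeonhole lemma for the validity proof of the 'impossible' axiom: let k, ℓ ≥ 1, n = k + ℓ, and let Z be an (n+1) × n matrix of cells each colored 'a', 'b', or 'none'. Suppose every row of Z contains at most k cells colored 'a' and every column of Z contains at most ℓ cells colored 'b'. Then some cell of Z is colored 'none'. -/
theorem stmt_13 (k l n : ℕ) (hk : 1 ≤ k) (hl : 1 ≤ l) (hn : n = k + l)
    (color : Fin (n + 1) → Fin n → Option Bool)
    (hrow : ∀ i : Fin (n + 1),
      (Finset.univ.filter fun j : Fin n => color i j = some true).card ≤ k)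
    (hcol : ∀ j : Fin n,
      (Finset.univ.filter fun i : Fin (n + 1) => color i j = some false).card ≤ l) :
    ∃ (i : Fin (n + 1)) (j : Fin n), color i j = none := by
  by_contra h
  push_neg at h
  -- each row has at least l cells colored false
  have hrowf : ∀ i : Fin (n + 1),
      l ≤ (Finset.univ.filter fun j : Fin n => color i j = some false).card := by
    intro i
    have hsplit : (Finset.univ.filter fun j : Fin n => color i j = some true) ∪
        (Finset.univ.filter fun j : Fin n => color i j = some false) = Finset.univ := by
      ext j
      simp only [Finset.mem_union, Finset.mem_filter, Finset.mem_univ, true_and, iff_true]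
      cases hc : color i j with
      | none => exact absurd hc (h i j)
      | some b => cases b <;> simp
    have hdisj : Disjoint (Finset.univ.filter fun j : Fin n => color i j = some true)
        (Finset.univ.filter fun j : Fin n => color i j = some false) := by
      rw [Finset.disjoint_filter]
      intro j _ ht hf
      rw [ht] at hf; simp at hf
    have hcard := Finset.card_union_of_disjoint hdisj
    rw [hsplit] at hcard
    have : (Finset.univ.filter fun j : Fin n => color i j = some true).card +
        (Finset.univ.filter fun j : Fin n => color i j = some false).card = n := by
      simpa using hcard.symm
    have := hrow i
    omega
  have h1 : (n + 1) * l ≤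
      ∑ i : Fin (n + 1), (Finset.univ.filter fun j : Fin n => color i j = some false).card := by
    calc (n + 1) * l = ∑ _i : Fin (n + 1), l := by simp [Finset.sum_const, Nat.mul_comm]
    _ ≤ _ := Finset.sum_le_sum fun i _ => hrowf i
  have h2 : (∑ i : Fin (n + 1), (Finset.univ.filter fun j : Fin n => color i j = some false).card)
      = ∑ j : Fin n, (Finset.univ.filter fun i : Fin (n + 1) => color i j = some false).card := by
    simp only [Finset.card_filter]
    exact Finset.sum_comm
  have h3 : (∑ j : Fin n, (Finset.univ.filter fun i : Fin (n + 1) => color i j = some false).card)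
      ≤ n * l := by
    calc _ ≤ ∑ _j : Fin n, l := Finset.sum_le_sum fun j _ => hcol j
    _ = n * l := by simp [Finset.sum_const, Nat.mul_comm]
  rw [h2] at h1
  have := le_trans h1 h3
  nlinarith
end

section
/- The square frames H_k are not p-morphic images of square products: for k ≥ 1, let H_k be the bimodal frame on a 2k-element set W = A ⊔ B with |A| = |B| = k, where R_h is the full universal relation W × W and R_v relates w to w' iff (w,w' ∈ A and w ≠ w') or (w,w' ∈ B and w ≠ w'). Then there is no surjective bimodal p-morphism from any square product (U,≠_U) × (V,≠_V) with |U| = |V| > 0 onto H_k. -/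
/-- Vertical relation of the frame `H_k`: two points are related iff they lie
in the same column (`A` or `B`) and are distinct. -/
def HRv (k : ℕ) : Fin k ⊕ Fin k → Fin k ⊕ Fin k → Prop
  | Sum.inl a, Sum.inl b => a ≠ b
  | Sum.inr a, Sum.inr b => a ≠ b
  | _, _ => False


theorem stmt_14 (k : ℕ) (hk : 1 ≤ k) :
    ∀ (U V : Type u) (f : U × V → Fin k ⊕ Fin k),
      Nonempty U → Cardinal.mk U = Cardinal.mk V →
      ¬ IsBiPMorphism (fun _ _ => True) (HRv k) f := by
  intro U V f hU hcard hf
  obtain ⟨hsurj, hfh, hfv, hbh, hbv⟩ := hf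
  obtain ⟨u0⟩ := hU
  -- V is nonempty
  have hVne : Nonempty V := by
    rw [← Cardinal.mk_ne_zero_iff, ← hcard]
    exact Cardinal.mk_ne_zero_iff.mpr ⟨u0⟩
  obtain ⟨v0⟩ := hVne
  -- Step 1: injective map V → Fin k, so mk V ≤ k
  set g : V → Fin k := fun v => match f (u0, v) with
    | Sum.inl a => a
    | Sum.inr a => a with hg
  have hginj : Function.Injective g := by
    intro v v' hvv'
    by_contra hne
    have hR : HRv k (f (u0, v)) (f (u0, v')) :=
      hfv (u0, v) (u0, v') ⟨hne, rfl⟩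
    simp only [hg] at hvv'
    cases h1 : f (u0, v) <;> cases h2 : f (u0, v') <;>
      rw [h1, h2] at hR hvv' <;> simp [HRv] at hR <;> exact hR hvv'
  have hV_le : Cardinal.mk V ≤ (k : Cardinal) := by
    have hinj2 : Function.Injective (fun v => ULift.up.{u} (g v)) :=
      fun a b h => hginj (congrArg ULift.down h)
    have := Cardinal.mk_le_of_injective hinj2
    simpa using this
  -- Step 2: surjective map U → Fin k ⊕ Fin k, so 2k ≤ mk U
  have hUsurj : Function.Surjective (fun u : U => f (u, v0)) := by
    intro c
    obtain ⟨q, ⟨hq1, hq2⟩, hq3⟩ := hbh (u0, v0) c trivial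
    refine ⟨q.1, ?_⟩
    have : q = (q.1, v0) := by
      cases q; simp_all
    show f (q.1, v0) = c
    rw [← this]; exact hq3
  have hU_ge : (k : Cardinal) + (k : Cardinal) ≤ Cardinal.mk U := by
    have hsurj2 : Function.Surjective
        (fun u : U => ULift.up.{u} (f (u, v0))) := by
      intro c
      obtain ⟨u, hu⟩ := hUsurj c.down
      exact ⟨u, congrArg ULift.up hu⟩
    have := Cardinal.mk_le_of_surjective hsurj2
    simpa using this
  rw [hcard] at hU_ge
  have : (k : Cardinal) + (k : Cardinal) ≤ (k : Cardinal) := hU_ge.trans hV_le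
  have h2 : (k + k : ℕ) ≤ k := by
    rw [← Nat.cast_le (α := Cardinal)]
    push_cast
    exact this
  omega
end

section
/- Indistinguishability under few variables: for k > 2^m, consider the frame H_k (as above, with two R_v-columns of k R_v-irreflexive, R_h-reflexive-universal points) and the frame G_k obtained from H_k by merging, in each column, two points into a single point that is both R_h- and R_v-reflexive (so each column of G_k has k−2 irreflexive points and one doubly-reflexive point). Then for every valuation on H_k using at most m propositional variables, there is a valuation on G_k and a surjective p-morphism from the model on H_k onto the model on G_k (preserving the valuations). -/
/-- Vertical relation of the frame `G_k` (here on `Fin k ⊕ Fin k`, used with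
`k - 1` columns): distinct points of the same column are related, and the
designated point `0` of each column is in addition reflexive. -/
def GRv (k : ℕ) : Fin k ⊕ Fin k → Fin k ⊕ Fin k → Prop
  | Sum.inl a, Sum.inl b => a ≠ b ∨ (a.val = 0 ∧ b.val = 0)
  | Sum.inr a, Sum.inr b => a ≠ b ∨ (a.val = 0 ∧ b.val = 0)
  | _, _ => False

/-- Bimodal frame p-morphism (surjective, forward and backward conditions for
both relations). -/
def FramePMor {A : Type u} {B : Type v} (RhA RvA : A → A → Prop)
    (RhB RvB : B → B → Prop) (f : A → B) : Prop :=
  Function.Surjective f ∧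
  (∀ a a' : A, RhA a a' → RhB (f a) (f a')) ∧
  (∀ a a' : A, RvA a a' → RvB (f a) (f a')) ∧
  (∀ (a : A) (b : B), RhB (f a) b → ∃ a' : A, RhA a a' ∧ f a' = b) ∧
  (∀ (a : A) (b : B), RvB (f a) b → ∃ a' : A, RvA a a' ∧ f a' = b)


/-!
By pigeonhole, since a column has more than `2 ^ m` points, two distinct points `a`, `b` of it
satisfy the same variables among the first `m`. Collapsing `a` and `b` to the doubly reflexive
point, and mapping the other points of the column bijectively onto the remaining points, is a
p-morphism for the vertical relation (the two merged points see each other, which is exactly the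
reflexivity of their image) and respects the valuation. The horizontal relation is universal on
both sides, so only surjectivity matters for it.
-/

open Function

variable {α β γ δ : Type*}

def IsPMorphism (R : α → α → Prop) (S : β → β → Prop) (f : α → β) : Prop :=
  (∀ a a', R a a' → S (f a) (f a')) ∧ (∀ a b, S (f a) b → ∃ a', R a a' ∧ f a' = b)

theorem framePMor_iff {Rh Rv : α → α → Prop} {Sh Sv : β → β → Prop} {f : α → β} :
    FramePMor Rh Rv Sh Sv f ↔ Surjective f ∧ IsPMorphism Rh Sh f ∧ IsPMorphism Rv Sv f := by
  unfold FramePMor IsPMorphism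
  tauto

theorem Function.Surjective.isPMorphism_true {f : α → β} (hf : Surjective f) :
    IsPMorphism (fun _ _ => True) (fun _ _ => True) f :=
  ⟨fun _ _ _ => trivial, fun _ b _ => (hf b).imp fun _ h => ⟨trivial, h⟩⟩

theorem IsPMorphism.sumMap {R₁ : α → α → Prop} {S₁ : β → β → Prop} {R₂ : γ → γ → Prop}
    {S₂ : δ → δ → Prop} {f : α → β} {g : γ → δ} (hf : IsPMorphism R₁ S₁ f)
    (hg : IsPMorphism R₂ S₂ g) :
    IsPMorphism (Sum.LiftRel R₁ R₂) (Sum.LiftRel S₁ S₂) (Sum.map f g) := by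
  refine ⟨?_, ?_⟩
  · rintro _ _ (⟨h⟩ | ⟨h⟩)
    · exact .inl (hf.1 _ _ h)
    · exact .inr (hg.1 _ _ h)
  · rintro (a | a) (b | b) h <;> simp only [Sum.map_inl, Sum.map_inr, Sum.liftRel_inl_inl,
      Sum.liftRel_inr_inr, Sum.not_liftRel_inl_inr, Sum.not_liftRel_inr_inl] at h
    · obtain ⟨a', ha', rfl⟩ := hf.2 a b h
      exact ⟨.inl a', .inl ha', rfl⟩
    · obtain ⟨a', ha', rfl⟩ := hg.2 a b h
      exact ⟨.inr a', .inr ha', rfl⟩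

theorem exists_surjective_merge [Fintype α] [Fintype β]
    (hcard : Fintype.card α = Fintype.card β + 1) {a b : α} (hab : a ≠ b) (c : β) :
    ∃ g : α → β, Surjective g ∧ g a = c ∧
      ∀ x y, g x = g y ↔ x = y ∨ (x = a ∨ x = b) ∧ (y = a ∨ y = b) := by
  classical
  have hcard' : Fintype.card {x // x ≠ b} = Fintype.card β := by
    simp [Fintype.card_subtype_compl, hcard]
  -- `b` goes to `c`; the other points go bijectively onto `β`, with `a` also sent to `c`.
  let e₀ := Fintype.equivOfCardEq hcard'
  let e := e₀.trans (Equiv.swap (e₀ ⟨a, hab⟩) c)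
  have hea : e ⟨a, hab⟩ = c := by simp [e]
  have he : ∀ x (hx : x ≠ b), e ⟨x, hx⟩ = c ↔ x = a := fun x hx => by
    rw [← hea, e.injective.eq_iff, Subtype.mk.injEq]
  refine ⟨fun x => if h : x = b then c else e ⟨x, h⟩, fun d => ⟨e.symm d, ?_⟩,
    by simp [hab, hea], ?_⟩
  · simp [(e.symm d).2]
  · intro x y
    by_cases hx : x = b <;> by_cases hy : y = b <;>
      simp only [hx, hy, dite_true, dite_false, he, e.injective.eq_iff, Subtype.mk.injEq] <;> grind

theorem isPMorphism_ne_of_merge {g : α → β} (hg : Surjective g) {a b : α} (hab : a ≠ b)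
    (hmerge : ∀ x y, g x = g y ↔ x = y ∨ (x = a ∨ x = b) ∧ (y = a ∨ y = b)) :
    IsPMorphism (· ≠ ·) (fun x y => x ≠ y ∨ x = g a ∧ y = g a) g := by
  have hgb : g b = g a := (hmerge b a).2 (by tauto)
  refine ⟨fun x y hxy => ?_, fun x d hd => ?_⟩
  · by_cases h : g x = g y
    · obtain rfl | ⟨hx | rfl, hy | rfl⟩ := (hmerge x y).1 h <;> grind
    · exact .inl h
  · by_cases h : g x = d
    · obtain ⟨hx, rfl⟩ := hd.resolve_left (not_not.2 h)
      by_cases hxa : x = a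
      · exact ⟨b, hxa ▸ hab, hgb⟩
      · exact ⟨a, hxa, rfl⟩
    · obtain ⟨y, rfl⟩ := hg d
      exact ⟨y, fun hxy => h (hxy ▸ rfl), rfl⟩

theorem exists_ne_forall_mem_iff [Fintype α] {m : ℕ} (hcard : 2 ^ m < Fintype.card α)
    (V : ℕ → Set α) (hV : ∀ i, m ≤ i → V i = ∅) :
    ∃ a b, a ≠ b ∧ ∀ i, a ∈ V i ↔ b ∈ V i := by
  classical
  obtain ⟨a, b, hab, h⟩ := Fintype.exists_ne_map_eq_of_card_lt
    (fun x (j : Fin m) => x ∈ V j) (by simpa [Fintype.card_fun] using hcard)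
  refine ⟨a, b, hab, fun i => ?_⟩
  by_cases hi : i < m
  · exact iff_of_eq (congrFun h ⟨i, hi⟩)
  · simp [hV i (not_lt.1 hi)]

theorem Set.mem_iff_mem_image_of_saturated {f : α → β} {s : Set α}
    (hs : ∀ x y, f x = f y → (x ∈ s ↔ y ∈ s)) (x : α) : x ∈ s ↔ f x ∈ f '' s :=
  ⟨fun h => ⟨x, h, rfl⟩, fun ⟨y, hy, hxy⟩ => (hs y x hxy).1 hy⟩

theorem Sum.map_saturated {f : α → β} {g : γ → δ} {s : Set (α ⊕ γ)}
    (hf : ∀ x y, f x = f y → (Sum.inl x ∈ s ↔ Sum.inl y ∈ s))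
    (hg : ∀ x y, g x = g y → (Sum.inr x ∈ s ↔ Sum.inr y ∈ s)) (w w' : α ⊕ γ)
    (h : Sum.map f g w = Sum.map f g w') : w ∈ s ↔ w' ∈ s := by
  rcases w with x | x <;> rcases w' with y | y <;>
    simp only [Sum.map_inl, Sum.map_inr, Sum.inl.injEq, Sum.inr.injEq, reduceCtorEq] at h
  · exact hf x y h
  · exact hg x y h

theorem HRv_eq_liftRel (k : ℕ) : HRv k = Sum.LiftRel (· ≠ ·) (· ≠ ·) := by
  ext (a | a) (b | b) <;> simp [HRv]

theorem GRv_eq_liftRel {n : ℕ} (hn : 0 < n) :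
    GRv n = Sum.LiftRel (fun x y => x ≠ y ∨ x = ⟨0, hn⟩ ∧ y = ⟨0, hn⟩)
      (fun x y => x ≠ y ∨ x = ⟨0, hn⟩ ∧ y = ⟨0, hn⟩) := by
  ext (a | a) (b | b) <;> simp [GRv, Fin.ext_iff]

theorem exists_column_merge [Fintype α] [Fintype β]
    (hcard : Fintype.card α = Fintype.card β + 1) {m : ℕ} (hm : 2 ^ m < Fintype.card α)
    (V : ℕ → Set α) (hV : ∀ i, m ≤ i → V i = ∅) (c : β) :
    ∃ g : α → β, Surjective g ∧ IsPMorphism (· ≠ ·) (fun x y => x ≠ y ∨ x = c ∧ y = c) g ∧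
      ∀ i x y, g x = g y → (x ∈ V i ↔ y ∈ V i) := by
  obtain ⟨a, b, hab, hagree⟩ := exists_ne_forall_mem_iff hm V hV
  obtain ⟨g, hg, rfl, hmerge⟩ := exists_surjective_merge hcard hab c
  refine ⟨g, hg, isPMorphism_ne_of_merge hg hab hmerge, fun i x y hxy => ?_⟩
  obtain rfl | ⟨rfl | rfl, rfl | rfl⟩ := (hmerge x y).1 hxy
  all_goals first | exact Iff.rfl | exact hagree i | exact (hagree i).symm

theorem stmt_15 (k m : ℕ) (hkm : 2 ^ m < k)
    (Val : ℕ → Set (Fin k ⊕ Fin k))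
    (hgen : ∀ i : ℕ, m ≤ i → Val i = ∅) :
    ∃ (Val' : ℕ → Set (Fin (k - 1) ⊕ Fin (k - 1)))
      (f : Fin k ⊕ Fin k → Fin (k - 1) ⊕ Fin (k - 1)),
      FramePMor (fun _ _ => True) (HRv k) (fun _ _ => True) (GRv (k - 1)) f ∧
      ∀ (i : ℕ) (w : Fin k ⊕ Fin k), w ∈ Val i ↔ f w ∈ Val' i := by
  have hpos : 0 < k - 1 := by
    have := Nat.one_le_two_pow (n := m)
    omega
  have hcard : Fintype.card (Fin k) = Fintype.card (Fin (k - 1)) + 1 := by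
    simp only [Fintype.card_fin]
    omega
  obtain ⟨g₁, hs₁, hp₁, hv₁⟩ := exists_column_merge hcard (by simpa using hkm)
    (fun i => Sum.inl ⁻¹' Val i) (fun i hi => by simp [hgen i hi]) ⟨0, hpos⟩
  obtain ⟨g₂, hs₂, hp₂, hv₂⟩ := exists_column_merge hcard (by simpa using hkm)
    (fun i => Sum.inr ⁻¹' Val i) (fun i hi => by simp [hgen i hi]) ⟨0, hpos⟩
  refine ⟨fun i => Sum.map g₁ g₂ '' Val i, Sum.map g₁ g₂,
    framePMor_iff.2 ⟨hs₁.sumMap hs₂, (hs₁.sumMap hs₂).isPMorphism_true, ?_⟩,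
    fun i => Set.mem_iff_mem_image_of_saturated (Sum.map_saturated (hv₁ i) (hv₂ i))⟩
  rw [HRv_eq_liftRel, GRv_eq_liftRel hpos]
  exact hp₁.sumMap hp₂
end

section
/- No bad path implies solvability of the constraint system: let G be a countable directed graph on node set Z with edges labeled by λ ∈ {1,2}, together with functions max : Z → ℕ⁺ ∪ {ℵ₀} and min : Z → ℕ⁺ such that every edge z →^1 z' has a reverse edge z' →^1 z. Call a path z_0 →^{λ_1} z_1 → … →^{λ_m} z_m bad if max(z_0) < λ_1·…·λ_m · min(z_m) (for m = 0: max(z_0) < min(z_0)). If G contains no bad path, then there exists ξ : Z → ℕ⁺ ∪ {ℵ₀} such that for all z: min(z) ≤ ξ(z) ≤ max(z), and for every labeled edge z →^λ z', ξ(z) ≥ λ · ξ(z'). -/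
/-- `LPath e1 e2 z z' p` : there is a directed path from `z` to `z'` using
label-1 edges (`e1`) and label-2 edges (`e2`) whose labels multiply to `p`. -/
inductive LPath {Z : Type u} (e1 e2 : Z → Z → Prop) : Z → Z → ℕ → Prop where
  | nil (z : Z) : LPath e1 e2 z z 1
  | cons1 {z z' z'' : Z} {p : ℕ} :
      e1 z z' → LPath e1 e2 z' z'' p → LPath e1 e2 z z'' p
  | cons2 {z z' z'' : Z} {p : ℕ} :
      e2 z z' → LPath e1 e2 z' z'' p → LPath e1 e2 z z'' (2 * p)

theorem stmt_17 (Z : Type u) [Countable Z] (e1 e2 : Z → Z → Prop)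
    (hsym : ∀ z z' : Z, e1 z z' → e1 z' z)
    (maxv : Z → ℕ∞) (minv : Z → ℕ)
    (hmax : ∀ z, 1 ≤ maxv z) (hmin : ∀ z, 1 ≤ minv z)
    (hnobad : ¬ ∃ (z0 zm : Z) (p : ℕ),
      LPath e1 e2 z0 zm p ∧ maxv z0 < ((p * minv zm : ℕ) : ℕ∞)) :
    ∃ ξ : Z → ℕ∞,
      (∀ z, ((minv z : ℕ) : ℕ∞) ≤ ξ z ∧ ξ z ≤ maxv z) ∧
      (∀ z z' : Z, e1 z z' → ξ z' ≤ ξ z) ∧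
      (∀ z z' : Z, e2 z z' → 2 * ξ z' ≤ ξ z) := by
  push_neg at hnobad
  set f : (z : Z) → {q : Z × ℕ // LPath e1 e2 z q.1 q.2} → ℕ∞ :=
    fun z q => ((q.1.2 * minv q.1.1 : ℕ) : ℕ∞) with hf
  refine ⟨fun z => ⨆ q, f z q, fun z => ⟨?_, ?_⟩, ?_, ?_⟩
  · have := le_iSup (f z) ⟨(z, 1), .nil z⟩
    simpa [hf] using this
  · exact iSup_le fun q => hnobad z q.1.1 q.1.2 q.2
  · intro z z' h
    exact iSup_le fun q => le_iSup_of_le ⟨q.1, .cons1 h q.2⟩ le_rfl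
  · intro z z' h
    have ne : Nonempty {q : Z × ℕ // LPath e1 e2 z' q.1 q.2} := ⟨⟨(z', 1), .nil z'⟩⟩
    rw [two_mul]
    have hstep : (⨆ q, f z' q) + (⨆ q, f z' q) = ⨆ q, f z' q + f z' q := by
      refine ENat.iSup_add_iSup fun i j => ?_
      rcases le_total (f z' i) (f z' j) with hle | hle
      · exact ⟨j, add_le_add hle le_rfl⟩
      · exact ⟨i, add_le_add le_rfl hle⟩
    rw [hstep]
    refine iSup_le fun q => le_iSup_of_le ⟨(q.1.1, 2 * q.1.2), .cons2 h q.2⟩ ?_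
    simp only [hf]
    rw [← two_mul]
    push_cast
    ring_nf
    exact le_rfl
end
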